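/- Suppose G is a triangle free graph satisfying t(H) ≥ 0 for all its induced subgraphs H of the form G_v (where t(H) = e(H) − 6n(H) + 13α(H)), G is edge critical, and v is a vertex of minimal degree δ in G. Then δ² ≤ d²(v) ≤ t(G) + 6δ − 7, where d²(v) is the sum of degrees of neighbors of v. -/
import Mathlib


/-- A set of vertices is independent if no two of its elements are adjacent. -/
def SimpleGraph.IsIndepSet' {V : Type*} (G : SimpleGraph V) (s : Set V) : Prop :=
  s.Pairwise fun a b => ¬ G.Adj a b

/-- The independence number of a graph. -/
noncomputable def indepNum {V : Type*} (G : SimpleGraph V) : ℕ :=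
  sSup {n | ∃ s : Set V, SimpleGraph.IsIndepSet' G s ∧ s.ncard = n}

/-- The closed neighbourhood `B(v;1) = {v} ∪ N(v)`. -/
def ball {V : Type*} (G : SimpleGraph V) (v : V) : Set V :=
  insert v (G.neighborSet v)


/-- `G` is edge critical: removing any edge (i.e. passing to a proper subgraph on the
same vertex set) strictly increases the independence number. -/
def EdgeCritical {V : Type*} (G : SimpleGraph V) : Prop :=
  ∀ H : SimpleGraph V, H < G → indepNum G < indepNum H

private lemma indep_bdd {V : Type*} [Finite V] (G : SimpleGraph V) :
    BddAbove {n | ∃ s : Set V, G.IsIndepSet' s ∧ s.ncard = n} := by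
  refine ⟨Nat.card V, ?_⟩
  rintro n ⟨s, -, rfl⟩
  simpa [Set.ncard_univ] using Set.ncard_le_ncard (Set.subset_univ s) Set.finite_univ

private lemma indepNum_exists {V : Type*} [Finite V] (G : SimpleGraph V) :
    ∃ s : Set V, G.IsIndepSet' s ∧ s.ncard = indepNum G := by
  have hne : {n | ∃ s : Set V, G.IsIndepSet' s ∧ s.ncard = n}.Nonempty :=
    ⟨0, ∅, Set.pairwise_empty _, by simp⟩
  exact Nat.sSup_mem hne (indep_bdd G)

private lemma le_indepNum {V : Type*} [Finite V] (G : SimpleGraph V) (s : Set V)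
    (hs : G.IsIndepSet' s) : s.ncard ≤ indepNum G :=
  le_csSup (indep_bdd G) ⟨s, hs, rfl⟩

/-- The edge count: edges of the induced subgraph on the complement of the closed ball,
together with the edges touching `N(v)` (there are `d²(v)` of them, by triangle-freeness),
are distinct edges of `G`. -/
private lemma edge_step {V : Type*} [Fintype V] (G : SimpleGraph V) [DecidableRel G.Adj]
    (h3 : G.CliqueFree 3) (v : V) :
    (G.induce (ball G v)ᶜ).edgeSet.ncard + ∑ w ∈ G.neighborFinset v, G.degree w
      ≤ G.edgeFinset.card := by
  classical
  set s : Set V := (ball G v)ᶜ with hs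
  set H := G.induce s with hH
  set E1 : Set (Sym2 V) := Sym2.map (Subtype.val : s → V) '' H.edgeSet with hE1
  have hinj : Function.Injective (Sym2.map (Subtype.val : s → V)) :=
    Sym2.map.injective Subtype.val_injective
  have hE1card : E1.ncard = H.edgeSet.ncard := Set.ncard_image_of_injective _ hinj
  set B : Finset (Sym2 V) := (G.neighborFinset v).biUnion (fun w => G.incidenceFinset w) with hB
  have hBcard : B.card = ∑ w ∈ G.neighborFinset v, G.degree w := by
    rw [hB, Finset.card_biUnion]
    · exact Finset.sum_congr rfl fun w _ => G.card_incidenceFinset_eq_degree w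
    · intro a ha b hb hab
      simp only [Finset.disjoint_left]
      intro e hea heb
      rw [SimpleGraph.mem_incidenceFinset] at hea heb
      have hadj : G.Adj a b := G.adj_of_mem_incidenceSet hab hea heb
      exact h3 {v, a, b} (SimpleGraph.is3Clique_triple_iff.2
        ⟨(G.mem_neighborFinset v a).1 ha, (G.mem_neighborFinset v b).1 hb, hadj⟩)
  have hE1sub : E1 ⊆ G.edgeSet := by
    rintro e ⟨f, hf, rfl⟩
    induction f with
    | _ x y => exact hf
  have hBsub : (B : Set (Sym2 V)) ⊆ G.edgeSet := by
    intro e he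
    simp only [hB, Finset.coe_biUnion, Set.mem_iUnion] at he
    obtain ⟨w, -, he⟩ := he
    rw [Finset.mem_coe, SimpleGraph.mem_incidenceFinset] at he
    exact he.1
  have hdisj : Disjoint E1 (B : Set (Sym2 V)) := by
    rw [Set.disjoint_left]
    rintro e ⟨f, hf, rfl⟩ heB
    simp only [hB, Finset.coe_biUnion, Set.mem_iUnion] at heB
    obtain ⟨w, hw, he⟩ := heB
    rw [Finset.mem_coe, SimpleGraph.mem_incidenceFinset] at he
    have hwmem : w ∈ Sym2.map (Subtype.val : s → V) f := he.2
    induction f with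
    | _ x y =>
      simp only [Sym2.map_pair_eq, Sym2.mem_iff] at hwmem
      have hwn : w ∈ G.neighborSet v := by simpa using hw
      rcases hwmem with h | h
      · exact x.2 (Set.mem_insert_iff.2 (Or.inr (h ▸ hwn)))
      · exact y.2 (Set.mem_insert_iff.2 (Or.inr (h ▸ hwn)))
  have hunion : E1.ncard + B.card ≤ G.edgeFinset.card := by
    have h1 : (E1 ∪ B).ncard = E1.ncard + (B : Set (Sym2 V)).ncard :=
      Set.ncard_union_eq hdisj (Set.toFinite _) (Set.toFinite _)
    have h2 : (E1 ∪ B).ncard ≤ G.edgeSet.ncard :=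
      Set.ncard_le_ncard (Set.union_subset hE1sub hBsub) (Set.toFinite _)
    rw [Set.ncard_coe_finset] at h1
    rw [← SimpleGraph.coe_edgeFinset, Set.ncard_coe_finset] at h2
    omega
  rw [← hE1card, ← hBcard]
  exact hunion

/-- Adding `v` to an independent set of the subgraph induced on the complement of the
closed ball of `v` gives an independent set of `G`. -/
private lemma indep_step {V : Type*} [Fintype V] (G : SimpleGraph V) (v : V) :
    indepNum (G.induce (ball G v)ᶜ) + 1 ≤ indepNum G := by
  classical
  set s : Set V := (ball G v)ᶜ with hs
  set H := G.induce s with hH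
  obtain ⟨S, hSind, hScard⟩ := indepNum_exists H
  set T : Set V := insert v (Subtype.val '' S) with hT
  have hvnot : v ∉ (Subtype.val '' S : Set V) := by
    rintro ⟨x, -, hx⟩
    exact x.2 (by rw [hx]; exact Set.mem_insert _ _)
  have hTind : G.IsIndepSet' T := by
    rw [hT]
    apply Set.Pairwise.insert
    · rintro a ⟨x, hx, rfl⟩ b ⟨y, hy, rfl⟩ hab
      have hxy : x ≠ y := fun h => hab (by rw [h])
      exact hSind hx hy hxy
    · rintro b ⟨y, hy, rfl⟩ hb
      have hyn : (y : V) ∉ ball G v := y.2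
      constructor
      · intro hadj
        exact hyn (Set.mem_insert_iff.2 (Or.inr hadj))
      · intro hadj
        exact hyn (Set.mem_insert_iff.2 (Or.inr (G.adj_symm hadj)))
  have hTcard : T.ncard = indepNum H + 1 := by
    rw [hT, Set.ncard_insert_of_notMem hvnot (Set.toFinite _),
      Set.ncard_image_of_injective _ Subtype.val_injective, hScard]
  calc indepNum H + 1 = T.ncard := hTcard.symm
    _ ≤ indepNum G := le_indepNum G T hTind

/-- The complement of the closed ball of `v` has at least `n - δ - 1` vertices. -/
private lemma vertex_step {V : Type*} [Fintype V] (G : SimpleGraph V) [DecidableRel G.Adj]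
    (v : V) :
    (Fintype.card V : ℤ) - G.degree v - 1 ≤ (Nat.card ((ball G v)ᶜ : Set V) : ℤ) := by
  classical
  have h1 : Nat.card ((ball G v)ᶜ : Set V) = ((ball G v)ᶜ : Set V).ncard :=
    Nat.card_coe_set_eq _
  have h2 : (ball G v).ncard + ((ball G v)ᶜ : Set V).ncard = Fintype.card V := by
    simpa [Set.ncard_univ, Nat.card_eq_fintype_card] using
      Set.ncard_add_ncard_compl (ball G v)
  have h3 : (ball G v).ncard ≤ G.degree v + 1 := by
    have hd : (G.neighborSet v).ncard = G.degree v := by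
      rw [← Nat.card_coe_set_eq, Nat.card_eq_fintype_card]
      exact G.card_neighborSet_eq_degree v
    calc (ball G v).ncard ≤ (G.neighborSet v).ncard + 1 := Set.ncard_insert_le _ _
      _ = G.degree v + 1 := by rw [hd]
  rw [h1]
  omega

theorem second_valency_bounds {V : Type*} [Fintype V] (G : SimpleGraph V)
    [DecidableRel G.Adj] (h3 : G.CliqueFree 3) (hcrit : EdgeCritical G)
    (ht : ∀ u : V, 0 ≤ ((G.induce (ball G u)ᶜ).edgeSet.ncard : ℤ) -
        6 * (Nat.card ((ball G u)ᶜ : Set V) : ℤ) + 13 * (indepNum (G.induce (ball G u)ᶜ) : ℤ))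
    (v : V) (hv : ∀ w : V, G.degree v ≤ G.degree w) :
    (G.degree v : ℤ) ^ 2 ≤ ∑ w ∈ G.neighborFinset v, (G.degree w : ℤ) ∧
    ∑ w ∈ G.neighborFinset v, (G.degree w : ℤ) ≤
      ((G.edgeFinset.card : ℤ) - 6 * (Fintype.card V : ℤ) + 13 * (indepNum G : ℤ)) +
        6 * (G.degree v : ℤ) - 7 := by
  constructor
  · calc (G.degree v : ℤ) ^ 2 = ∑ _w ∈ G.neighborFinset v, (G.degree v : ℤ) := by
          rw [Finset.sum_const, G.card_neighborFinset_eq_degree, nsmul_eq_mul]; ring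
      _ ≤ ∑ w ∈ G.neighborFinset v, (G.degree w : ℤ) :=
          Finset.sum_le_sum fun w _ => by exact_mod_cast hv w
  · have hedge := edge_step G h3 v
    have hedge' : ((G.induce (ball G v)ᶜ).edgeSet.ncard : ℤ) +
        ∑ w ∈ G.neighborFinset v, (G.degree w : ℤ) ≤ (G.edgeFinset.card : ℤ) := by
      exact_mod_cast hedge
    have hind := indep_step G v
    have hind' : (indepNum (G.induce (ball G v)ᶜ) : ℤ) + 1 ≤ (indepNum G : ℤ) := by
      exact_mod_cast hind
    have hvert := vertex_step G v
    have htv := ht v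
    linarith
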